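/- arXiv:1110.6550 — 3 statements merged into one kernel-verified Lean document; each statement's English description precedes it below -/
import Mathlib

section
/- There exists a constant C < ∞ such that for every Schwartz function φ : ℝ → ℂ and every k > 0: | lim_{ε→0⁺} ∫_ℝ φ(ρ)/(ρ² − 2k − iε) dρ | ≤ C k^{−1/2} ‖φ̂‖_{L¹(ℝ)} and | ∫_ℝ φ(ρ)/(ρ² + 2k) dρ | ≤ C k^{−1/2} ‖φ̂‖_{L¹(ℝ)}, where φ̂ denotes the Fourier transform of φ, φ̂(x) := (2π)^{−1/2} ∫_ℝ e^{ixρ} φ(ρ) dρ. -/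
/-!
For `0 < c.re` one has `∫ e^{ixρ} e^{-c|x|} dx = 2c / (ρ² + c²)`, so by Fubini
`∫ φ(ρ) / (ρ² + c²) dρ = √(2π) / (2c) · ∫ φ̂(x) e^{-c|x|} dx`, and `|e^{-c|x|}| ≤ 1` bounds this by
`√(2π) / (2|c|) · ‖φ̂‖₁`. The choice `c = √(2k)` gives the second estimate. For the first,
`c = -i √(2k + iε)` satisfies `c² = -(2k + iε)` and `0 < c.re`; the right-hand side is continuous in
`c` on `0 ≤ c.re` by dominated convergence, so as `ε → 0⁺` it tends to its value at `c = -i √(2k)`,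
where `|c| = √(2k)`.
-/

open MeasureTheory Filter Real

noncomputable section

/-- The Fourier transform `φ̂(x) = (2π)^{-1/2} ∫ e^{ixρ} φ(ρ) dρ` of a function on ℝ. -/
noncomputable def hat1 (φ : ℝ → ℂ) (x : ℝ) : ℂ :=
  (((2 * π) ^ (-(1:ℝ)/2) : ℝ) : ℂ) * ∫ ρ : ℝ, Complex.exp (Complex.I * x * ρ) * φ ρ

open Complex Set Topology FourierTransform

section Kernel

variable {c : ℂ}

lemma norm_mul_cexp_neg_mul_abs_le (hc : 0 ≤ c.re) (w : ℂ) (x : ℝ) :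
    ‖w * cexp (-(c * |x|))‖ ≤ ‖w‖ := by
  rw [norm_mul, norm_exp]
  refine mul_le_of_le_one_right (norm_nonneg w) (Real.exp_le_one_iff.2 ?_)
  simpa using mul_nonneg hc (abs_nonneg x)

lemma cexp_mul_I_mul_cexp_neg_mul_abs_of_nonpos {x : ℝ} (hx : x ≤ 0) (ρ : ℝ) :
    cexp (I * x * ρ) * cexp (-(c * |x|)) = cexp ((c + I * ρ) * x) := by
  rw [← Complex.exp_add, abs_of_nonpos hx]
  push_cast
  ring_nf

lemma cexp_mul_I_mul_cexp_neg_mul_abs_of_nonneg {x : ℝ} (hx : 0 ≤ x) (ρ : ℝ) :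
    cexp (I * x * ρ) * cexp (-(c * |x|)) = cexp ((I * ρ - c) * x) := by
  rw [← Complex.exp_add, abs_of_nonneg hx]
  ring_nf

lemma integrableOn_cexp_mul_I_mul_cexp_neg_mul_abs_Iic (hc : 0 < c.re) (ρ : ℝ) :
    IntegrableOn (fun x : ℝ => cexp (I * x * ρ) * cexp (-(c * |x|))) (Iic 0) :=
  (integrableOn_exp_mul_complex_Iic (a := c + I * ρ) (by simpa using hc) 0).congr_fun
    (fun _ hx => (cexp_mul_I_mul_cexp_neg_mul_abs_of_nonpos hx ρ).symm) measurableSet_Iic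

lemma integrableOn_cexp_mul_I_mul_cexp_neg_mul_abs_Ioi (hc : 0 < c.re) (ρ : ℝ) :
    IntegrableOn (fun x : ℝ => cexp (I * x * ρ) * cexp (-(c * |x|))) (Ioi 0) :=
  (integrableOn_exp_mul_complex_Ioi (a := I * ρ - c) (by simpa using hc) 0).congr_fun
    (fun _ hx => (cexp_mul_I_mul_cexp_neg_mul_abs_of_nonneg (le_of_lt hx) ρ).symm)
    measurableSet_Ioi

lemma integrable_cexp_neg_mul_abs (hc : 0 < c.re) :
    Integrable (fun x : ℝ => cexp (-(c * |x|))) := by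
  have := (integrableOn_cexp_mul_I_mul_cexp_neg_mul_abs_Iic hc 0).union
    (integrableOn_cexp_mul_I_mul_cexp_neg_mul_abs_Ioi hc 0)
  simpa using this

lemma integral_cexp_mul_I_mul_cexp_neg_mul_abs (hc : 0 < c.re) (ρ : ℝ) :
    ∫ x : ℝ, cexp (I * x * ρ) * cexp (-(c * |x|)) = 2 * c / (ρ ^ 2 + c ^ 2) := by
  have hl : c + I * ρ ≠ 0 := fun h => by simpa [hc.ne'] using congrArg re h
  have hr : c - I * ρ ≠ 0 := fun h => by simpa [hc.ne'] using congrArg re h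
  rw [← intervalIntegral.integral_Iic_add_Ioi
      (integrableOn_cexp_mul_I_mul_cexp_neg_mul_abs_Iic hc ρ)
      (integrableOn_cexp_mul_I_mul_cexp_neg_mul_abs_Ioi hc ρ),
    setIntegral_congr_fun measurableSet_Iic
      (fun _ hx => cexp_mul_I_mul_cexp_neg_mul_abs_of_nonpos hx ρ),
    setIntegral_congr_fun measurableSet_Ioi
      (fun _ hx => cexp_mul_I_mul_cexp_neg_mul_abs_of_nonneg (le_of_lt hx) ρ),
    integral_exp_mul_complex_Iic (by simpa using hc),
    integral_exp_mul_complex_Ioi (by simpa using hc),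
    show (ρ : ℂ) ^ 2 + c ^ 2 = (c + I * ρ) * (c - I * ρ) by ring_nf; rw [I_sq]; ring,
    show I * ρ - c = -(c - I * ρ) by ring]
  simp only [ofReal_zero, mul_zero, Complex.exp_zero]
  field_simp
  ring

end Kernel

section Resolvent

variable {φ : ℝ → ℂ} {c : ℂ}

lemma integral_integral_cexp_mul_I_mul_cexp_neg_mul_abs (hφ : Integrable φ) (hc : 0 < c.re) :
    ∫ x : ℝ, (∫ ρ : ℝ, cexp (I * x * ρ) * φ ρ) * cexp (-(c * |x|)) =
      2 * c * ∫ ρ : ℝ, φ ρ / (ρ ^ 2 + c ^ 2) := by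
  have hint : Integrable (Function.uncurry fun x ρ : ℝ =>
      cexp (I * x * ρ) * φ ρ * cexp (-(c * |x|))) (volume.prod volume) := by
    refine Integrable.mono' ((integrable_cexp_neg_mul_abs hc).norm.mul_prod hφ.norm) ?_ ?_
    · have hexp : Continuous fun p : ℝ × ℝ => cexp (I * p.1 * p.2) := by fun_prop
      have hdamp : Continuous fun p : ℝ × ℝ => cexp (-(c * |p.1|)) := by fun_prop
      exact (hexp.aestronglyMeasurable.mul hφ.1.comp_snd).mul hdamp.aestronglyMeasurable
    · filter_upwards with ⟨x, ρ⟩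
      simp [norm_exp, mul_comm]
  calc _ = ∫ x : ℝ, ∫ ρ : ℝ, cexp (I * x * ρ) * φ ρ * cexp (-(c * |x|)) := by
        simp_rw [integral_mul_const]
    _ = ∫ ρ : ℝ, ∫ x : ℝ, cexp (I * x * ρ) * φ ρ * cexp (-(c * |x|)) := integral_integral_swap hint
    _ = ∫ ρ : ℝ, 2 * c * (φ ρ / (ρ ^ 2 + c ^ 2)) := by
        congr 1 with ρ
        rw [← mul_div_assoc, mul_comm, mul_div_assoc,
          ← integral_cexp_mul_I_mul_cexp_neg_mul_abs hc ρ, ← integral_const_mul]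
        congr 1 with x
        ring
    _ = _ := integral_const_mul _ _

/-- For `0 < c.re` this is `∫ φ ρ / (ρ² + c²)` (`integral_div_sq_add_sq_eq_hatResolvent`), but
unlike that integral it depends continuously on `c` up to the imaginary axis. -/
def hatResolvent (φ : ℝ → ℂ) (c : ℂ) : ℂ :=
  √(2 * π) / (2 * c) * ∫ x : ℝ, hat1 φ x * cexp (-(c * |x|))

lemma integral_div_sq_add_sq_eq_hatResolvent (hφ : Integrable φ) (hc : 0 < c.re) :
    ∫ ρ : ℝ, φ ρ / (ρ ^ 2 + c ^ 2) = hatResolvent φ c := by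
  have hc0 : c ≠ 0 := fun h => by simp [h] at hc
  have hpi : (2 * π) ^ (-(1:ℝ)/2) = (√(2 * π))⁻¹ := by
    rw [sqrt_eq_rpow, ← rpow_neg (by positivity)]
    norm_num
  have hdamped : ∫ x : ℝ, hat1 φ x * cexp (-(c * |x|)) =
      ((2 * π) ^ (-(1:ℝ)/2) : ℝ) * (2 * c * ∫ ρ : ℝ, φ ρ / (ρ ^ 2 + c ^ 2)) := by
    rw [← integral_integral_cexp_mul_I_mul_cexp_neg_mul_abs hφ hc, ← integral_const_mul]
    congr 1 with x
    rw [hat1, mul_assoc]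
  have hsqrt : (√(2 * π) : ℂ) ≠ 0 := by exact_mod_cast (sqrt_pos.2 (by positivity)).ne'
  rw [hatResolvent, hdamped, hpi]
  push_cast
  field_simp

lemma norm_hatResolvent_le (hφ : Integrable (hat1 φ)) (hc : 0 ≤ c.re) :
    ‖hatResolvent φ c‖ ≤ √(2 * π) / (2 * ‖c‖) * ∫ x : ℝ, ‖hat1 φ x‖ := by
  rw [hatResolvent, norm_mul, norm_div, norm_mul, Complex.norm_two, norm_real,
    norm_of_nonneg (sqrt_nonneg _)]
  gcongr
  exact norm_integral_le_of_norm_le hφ.norm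
    (ae_of_all _ fun x => norm_mul_cexp_neg_mul_abs_le hc _ x)

lemma continuousWithinAt_hatResolvent (hφ : Integrable (hat1 φ)) (hc0 : c ≠ 0) (hc : 0 ≤ c.re) :
    ContinuousWithinAt (hatResolvent φ) {c | 0 ≤ c.re} c := by
  have hdamped : ContinuousOn (fun c : ℂ => ∫ x : ℝ, hat1 φ x * cexp (-(c * |x|)))
      {c | 0 ≤ c.re} :=
    continuousOn_of_dominated
      (fun c _ => hφ.1.mul
        (by fun_prop : Continuous fun x : ℝ => cexp (-(c * |x|))).aestronglyMeasurable)
      (fun _ hc => ae_of_all _ fun x => norm_mul_cexp_neg_mul_abs_le hc _ x)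
      hφ.norm (ae_of_all _ fun x => by fun_prop)
  exact ((continuousAt_const.div (continuousAt_const.mul continuousAt_id)
    (mul_ne_zero two_ne_zero hc0)).continuousWithinAt).mul (hdamped c hc)

end Resolvent

section UpperSqrt

variable {z : ℂ}

lemma neg_I_mul_cpow_inv_two_sq (z : ℂ) : (-I * z ^ (2⁻¹ : ℂ)) ^ 2 = -z := by
  rw [mul_pow, cpow_ofNat_inv_pow]
  simp

lemma re_neg_I_mul_cpow_inv_two_nonneg (hz : 0 ≤ z.im) : 0 ≤ (-I * z ^ (2⁻¹ : ℂ)).re := by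
  simp only [neg_mul, neg_re, mul_re, I_re, I_im, zero_mul, one_mul, zero_sub, neg_neg]
  exact cpow_inv_two_im_eq_sqrt hz ▸ sqrt_nonneg _

lemma re_neg_I_mul_cpow_inv_two_pos (hz : 0 < z.im) : 0 < (-I * z ^ (2⁻¹ : ℂ)).re := by
  have hre : z.re < ‖z‖ := (le_abs_self z.re).trans_lt (abs_re_lt_norm.2 hz.ne')
  simpa [cpow_inv_two_im_eq_sqrt hz.le] using hre

lemma norm_neg_I_mul_ofReal_cpow_inv_two {a : ℝ} (ha : 0 < a) :
    ‖-I * (a : ℂ) ^ (2⁻¹ : ℂ)‖ = √a := by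
  simp [norm_cpow_eq_rpow_re_of_pos ha, sqrt_eq_rpow]

end UpperSqrt

section LimitingAbsorption

variable {φ : ℝ → ℂ} {a : ℝ}

theorem norm_integral_div_sq_add_le (hφ : Integrable φ) (hφ' : Integrable (hat1 φ)) (ha : 0 < a) :
    ‖∫ ρ : ℝ, φ ρ / ((ρ ^ 2 + a : ℝ) : ℂ)‖ ≤ √(2 * π) / (2 * √a) * ∫ x : ℝ, ‖hat1 φ x‖ := by
  have hc : 0 < ((√a : ℝ) : ℂ).re := by simpa using ha
  have hsq : ∀ ρ : ℝ, ((ρ ^ 2 + a : ℝ) : ℂ) = ρ ^ 2 + ((√a : ℝ) : ℂ) ^ 2 := fun ρ => by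
    rw [← ofReal_pow (√a), sq_sqrt ha.le]
    push_cast
    rfl
  simp_rw [hsq, integral_div_sq_add_sq_eq_hatResolvent hφ hc]
  simpa [norm_real, abs_of_nonneg (sqrt_nonneg a)] using norm_hatResolvent_le hφ' hc.le

theorem exists_tendsto_integral_div_sq_sub (hφ : Integrable φ) (hφ' : Integrable (hat1 φ))
    (ha : 0 < a) :
    ∃ L : ℂ,
      Tendsto (fun z : ℂ => ∫ ρ : ℝ, φ ρ / (ρ ^ 2 - z)) (𝓝[{z | 0 < z.im}] (a : ℂ)) (𝓝 L) ∧
      ‖L‖ ≤ √(2 * π) / (2 * √a) * ∫ x : ℝ, ‖hat1 φ x‖ := by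
  set s : ℂ → ℂ := fun z => -I * z ^ (2⁻¹ : ℂ)
  have hsa : ‖s a‖ = √a := norm_neg_I_mul_ofReal_cpow_inv_two ha
  have hsa_re : 0 ≤ (s a).re := re_neg_I_mul_cpow_inv_two_nonneg (by simp)
  have hs : Tendsto s (𝓝[{z | 0 < z.im}] (a : ℂ)) (𝓝[{c | 0 ≤ c.re}] (s a)) := by
    refine tendsto_nhdsWithin_iff.2 ⟨?_, ?_⟩
    · exact (continuousAt_const.mul (continuousAt_cpow_const (ofReal_mem_slitPlane.2 ha))).tendsto
        |>.mono_left nhdsWithin_le_nhds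
    · filter_upwards [self_mem_nhdsWithin] with z hz using (re_neg_I_mul_cpow_inv_two_pos hz).le
  refine ⟨hatResolvent φ (s a), ?_, hsa ▸ norm_hatResolvent_le hφ' hsa_re⟩
  have hsa0 : s a ≠ 0 := norm_pos_iff.1 (hsa ▸ sqrt_pos.2 ha)
  refine ((continuousWithinAt_hatResolvent hφ' hsa0 hsa_re).tendsto.comp hs).congr' ?_
  filter_upwards [self_mem_nhdsWithin] with z hz
  rw [Function.comp_apply,
    ← integral_div_sq_add_sq_eq_hatResolvent hφ (re_neg_I_mul_cpow_inv_two_pos hz),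
    neg_I_mul_cpow_inv_two_sq]
  simp only [sub_eq_add_neg]

end LimitingAbsorption

lemma hat1_eq_fourier (φ : ℝ → ℂ) (x : ℝ) :
    hat1 φ x = ((2 * π) ^ (-(1:ℝ)/2) : ℝ) * 𝓕 φ (-x / (2 * π)) := by
  rw [hat1, Real.fourier_real_eq_integral_exp_smul]
  congr 2 with v
  rw [smul_eq_mul, show -2 * π * v * (-x / (2 * π)) = v * x by field_simp]
  push_cast
  ring_nf

lemma integrable_hat1 (φ : SchwartzMap ℝ ℂ) : Integrable (hat1 φ) := by
  have hφ : Integrable (𝓕 (φ : ℝ → ℂ)) := by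
    rw [← SchwartzMap.fourier_coe]
    exact (𝓕 φ).integrable
  refine ((hφ.comp_mul_left' (R := -(2 * π)⁻¹) (by simp [pi_ne_zero])).const_mul
    (((2 * π) ^ (-(1:ℝ)/2) : ℝ) : ℂ)).congr (ae_of_all _ fun x => ?_)
  rw [hat1_eq_fourier, show -x / (2 * π) = -(2 * π)⁻¹ * x by ring]

lemma sqrt_two_pi_div_two_sqrt_two_mul {k : ℝ} (hk : 0 < k) :
    √(2 * π) / (2 * √(2 * k)) = √π / 2 * k ^ (-(1:ℝ)/2) := by
  rw [sqrt_mul zero_le_two π, sqrt_mul zero_le_two k, show (-(1:ℝ)/2) = -(1/2) by norm_num,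
    rpow_neg hk.le, ← sqrt_eq_rpow]
  have : (0:ℝ) < √2 := by positivity
  have : (0:ℝ) < √k := sqrt_pos.2 hk
  field_simp

lemma tendsto_ofReal_add_I_mul_nhdsGT (a : ℝ) :
    Tendsto (fun ε : ℝ => (a : ℂ) + I * ε) (𝓝[>] 0) (𝓝[{z | 0 < z.im}] (a : ℂ)) :=
  tendsto_nhdsWithin_iff.2
    ⟨((by fun_prop : Continuous fun ε : ℝ => (a : ℂ) + I * ε).tendsto' 0 _ (by simp)).mono_left
      nhdsWithin_le_nhds,
    by filter_upwards [self_mem_nhdsWithin] with ε hε using by simpa using hε⟩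

theorem stmt12 :
    ∃ C : ℝ, ∀ (φ : SchwartzMap ℝ ℂ) (k : ℝ), 0 < k →
      (∃ L : ℂ,
        Tendsto (fun ε : ℝ => ∫ ρ : ℝ, φ ρ / (((ρ^2 - 2*k : ℝ) : ℂ) - Complex.I * ε))
          (nhdsWithin 0 (Set.Ioi 0)) (nhds L) ∧
        ‖L‖ ≤ C * k ^ (-(1:ℝ)/2) * ∫ x : ℝ, ‖hat1 (⇑φ) x‖)
      ∧ ‖∫ ρ : ℝ, φ ρ / (((ρ^2 + 2*k : ℝ) : ℂ))‖
          ≤ C * k ^ (-(1:ℝ)/2) * ∫ x : ℝ, ‖hat1 (⇑φ) x‖ := by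
  refine ⟨√π / 2, fun φ k hk => ?_⟩
  have h2k : 0 < 2 * k := by positivity
  rw [← sqrt_two_pi_div_two_sqrt_two_mul hk]
  refine ⟨?_, norm_integral_div_sq_add_le φ.integrable (integrable_hat1 φ) h2k⟩
  obtain ⟨L, hL, hL_le⟩ := exists_tendsto_integral_div_sq_sub φ.integrable (integrable_hat1 φ) h2k
  refine ⟨L, (hL.comp (tendsto_ofReal_add_I_mul_nhdsGT (2 * k))).congr fun ε => ?_, hL_le⟩
  simp only [Function.comp_apply]
  congr 1 with ρ
  push_cast
  ring_nf

end
end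

section
/- Let c₀ > 0 and (a_k)_{k∈ℕ} be positive constants, let f : [0,∞) → ℂ be smooth with |f^{(k)}(ρ)| ≤ a_k e^{−c₀ ρ} for all k ∈ ℕ and ρ ≥ 0, and let h : [0, 2π] → ℂ be smooth. Then there exist ε₀ > 0 and constants C_l (l ∈ ℕ) such that for every smooth y : [0,∞) → ℝ with |y(t)| ≤ ε₀ t^{1/2} for all t > 0, every l ∈ ℕ, and every t > 0: | ∫₀^{2π} h(θ) ∫₀^∞ e^{iρ²t} e^{iρ cos(θ) y(t)} ρ^l f(ρ²) dρ dθ | ≤ C_l (1+t)^{−(l+1)/2}. -/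
open MeasureTheory Filter Real

noncomputable section

open Set Topology

namespace Stmt16

def ker (t b : ℝ) (l : ℕ) (f : ℝ → ℂ) (ρ : ℝ) : ℂ :=
  Complex.exp (Complex.I * (ρ:ℂ)^2 * t) * Complex.exp (Complex.I * ρ * b) * (ρ:ℂ)^l * f (ρ^2)

def Jfun (t b : ℝ) (l : ℕ) (f : ℝ → ℂ) : ℂ := ∫ ρ in Ioi (0:ℝ), ker t b l f ρ

def Dc (c₀ : ℝ) (a : ℕ → ℝ) (f : ℝ → ℂ) : Prop :=
  (∀ n : ℕ, ContDiff ℝ n f) ∧ ∀ (k : ℕ) (x : ℝ), 0 ≤ x → ‖iteratedDeriv k f x‖ ≤ a k * Real.exp (-(c₀*x))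

lemma Dc.deriv {c₀ : ℝ} {a : ℕ → ℝ} {f : ℝ → ℂ} (h : Dc c₀ a f) :
    Dc c₀ (fun k => a (k+1)) (deriv f) := by
  obtain ⟨h1, h2⟩ := h
  refine ⟨fun n => ?_, fun k x hx => ?_⟩
  · have := h1 (n+1)
    push_cast at this
    exact (contDiff_succ_iff_deriv.1 this).2.2
  · simpa [← iteratedDeriv_succ'] using h2 (k+1) x hx

lemma Dc.a_nonneg {c₀ : ℝ} {a : ℕ → ℝ} {f : ℝ → ℂ} (h : Dc c₀ a f) (k : ℕ) : 0 ≤ a k := by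
  have := h.2 k 0 le_rfl
  simp only [mul_zero, neg_zero, Real.exp_zero, mul_one] at this
  exact le_trans (norm_nonneg _) this

lemma norm_exp_I_mul (x : ℝ) : ‖Complex.exp (Complex.I * x)‖ = 1 := by
  rw [mul_comm, Complex.norm_exp_ofReal_mul_I]

lemma norm_E1 (t ρ : ℝ) : ‖Complex.exp (Complex.I * (ρ:ℂ)^2 * t)‖ = 1 := by
  have : Complex.I * (ρ:ℂ)^2 * t = Complex.I * ((ρ^2*t : ℝ) : ℂ) := by push_cast; ring
  rw [this, norm_exp_I_mul]

lemma norm_E2 (b ρ : ℝ) : ‖Complex.exp (Complex.I * (ρ:ℂ) * b)‖ = 1 := by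
  have : Complex.I * (ρ:ℂ) * b = Complex.I * ((ρ*b : ℝ) : ℂ) := by push_cast; ring
  rw [this, norm_exp_I_mul]

lemma norm_ker {t b : ℝ} (l : ℕ) (f : ℝ → ℂ) {ρ : ℝ} (hρ : 0 ≤ ρ) :
    ‖ker t b l f ρ‖ = ρ^l * ‖f (ρ^2)‖ := by
  rw [ker, norm_mul, norm_mul, norm_mul, norm_E1, norm_E2, norm_pow, Complex.norm_real,
    Real.norm_eq_abs, abs_of_nonneg hρ, one_mul, one_mul]

lemma integrableOn_dom {c₀ : ℝ} (hc₀ : 0 < c₀) (l : ℕ) :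
    IntegrableOn (fun ρ : ℝ => ρ^l * Real.exp (-(c₀*ρ^2))) (Ioi 0) := by
  have h := integrableOn_rpow_mul_exp_neg_mul_sq hc₀ (s := (l:ℝ)) ((by norm_num : (-1:ℝ) < 0).trans_le (Nat.cast_nonneg l))
  refine h.congr_fun (fun x hx => ?_) measurableSet_Ioi
  simp only [Real.rpow_natCast, neg_mul]

lemma continuous_ker (t b : ℝ) (l : ℕ) {f : ℝ → ℂ} (hf : Continuous f) :
    Continuous (ker t b l f) := by
  unfold ker; fun_prop

lemma integrableOn_ker {c₀ : ℝ} (hc₀ : 0 < c₀) {a : ℕ → ℝ} {f : ℝ → ℂ}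
    (hd : Dc c₀ a f) (t b : ℝ) (l : ℕ) :
    IntegrableOn (ker t b l f) (Ioi 0) := by
  refine Integrable.mono' (((integrableOn_dom hc₀ l).const_mul (a 0)))
    ((continuous_ker t b l (hd.1 0).continuous).aestronglyMeasurable.restrict) ?_
  filter_upwards [ae_restrict_mem measurableSet_Ioi] with ρ hρ
  have hρ' : (0:ℝ) ≤ ρ := le_of_lt hρ
  rw [norm_ker l f hρ']
  have := hd.2 0 (ρ^2) (by positivity)
  rw [iteratedDeriv_zero] at this
  calc ρ^l * ‖f (ρ^2)‖ ≤ ρ^l * (a 0 * Real.exp (-(c₀*ρ^2))) :=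
        mul_le_mul_of_nonneg_left this (pow_nonneg hρ' l)
    _ = a 0 * (ρ^l * Real.exp (-(c₀*ρ^2))) := by ring

lemma norm_J_le {c₀ : ℝ} (hc₀ : 0 < c₀) {a : ℕ → ℝ} {f : ℝ → ℂ}
    (hd : Dc c₀ a f) (t b : ℝ) (l : ℕ) :
    ‖Jfun t b l f‖ ≤ a 0 * ∫ ρ in Ioi (0:ℝ), ρ^l * Real.exp (-(c₀*ρ^2)) := by
  rw [← integral_const_mul]
  refine norm_integral_le_of_norm_le ((integrableOn_dom hc₀ l).const_mul (a 0)) ?_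
  filter_upwards [ae_restrict_mem measurableSet_Ioi] with ρ hρ
  have hρ' : (0:ℝ) ≤ ρ := le_of_lt hρ
  rw [norm_ker l f hρ']
  have := hd.2 0 (ρ^2) (by positivity)
  rw [iteratedDeriv_zero] at this
  calc ρ^l * ‖f (ρ^2)‖ ≤ ρ^l * (a 0 * Real.exp (-(c₀*ρ^2))) :=
        mul_le_mul_of_nonneg_left this (pow_nonneg hρ' l)
    _ = a 0 * (ρ^l * Real.exp (-(c₀*ρ^2))) := by ring


lemma hasDerivAt_E1 (t ρ : ℝ) :
    HasDerivAt (fun ρ : ℝ => Complex.exp (Complex.I*(ρ:ℂ)^2*t))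
      (Complex.I*2*ρ*t * Complex.exp (Complex.I*(ρ:ℂ)^2*t)) ρ := by
  have h2 : HasDerivAt (fun z : ℂ => Complex.I*z^2*t) (Complex.I*2*(ρ:ℂ)*t) (ρ:ℂ) := by
    have := ((hasDerivAt_pow 2 (ρ:ℂ)).const_mul Complex.I).mul_const (t:ℂ)
    convert this using 1; rfl; rfl; ring
  have := h2.cexp.comp_ofReal
  convert this using 1; ring

lemma hasDerivAt_E2 (b ρ : ℝ) :
    HasDerivAt (fun ρ : ℝ => Complex.exp (Complex.I*(ρ:ℂ)*b))
      (Complex.I*b * Complex.exp (Complex.I*(ρ:ℂ)*b)) ρ := by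
  have h2 : HasDerivAt (fun z : ℂ => Complex.I*z*b) (Complex.I*b) (ρ:ℂ) := by
    have := (hasDerivAt_id (ρ:ℂ)).const_mul Complex.I |>.mul_const (b:ℂ)
    convert this using 1; rfl; rfl; rfl; ring
  have := h2.cexp.comp_ofReal
  convert this using 1; ring

lemma hasDerivAt_fsq {f : ℝ → ℂ} (hf : Differentiable ℝ f) (ρ : ℝ) :
    HasDerivAt (fun ρ : ℝ => f (ρ^2)) (_root_.deriv f (ρ^2) * (2*(ρ:ℂ))) ρ := by
  have h1 : HasDerivAt f (_root_.deriv f (ρ^2)) (ρ^2) := (hf (ρ^2)).hasDerivAt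
  have h2 : HasDerivAt (fun ρ : ℝ => ρ^2) (2*ρ) ρ := by simpa using hasDerivAt_pow 2 ρ
  have := HasDerivAt.scomp (h := fun y : ℝ => y^2) ρ h1 h2
  convert this using 1; rfl; rfl
  rw [Complex.real_smul]; push_cast; ring

def kerD (t b : ℝ) (m : ℕ) (f : ℝ → ℂ) (ρ : ℝ) : ℂ :=
  Complex.I*2*t*ker t b (m+1) f ρ + Complex.I*b*ker t b m f ρ + (m:ℂ)*ker t b (m-1) f ρ
    + 2*ker t b (m+1) (_root_.deriv f) ρ

lemma hasDerivAt_ker {f : ℝ → ℂ} (hf : Differentiable ℝ f) (t b : ℝ) (m : ℕ) (ρ : ℝ) :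
    HasDerivAt (ker t b m f) (kerD t b m f ρ) ρ := by
  have h := (((hasDerivAt_E1 t ρ).mul (hasDerivAt_E2 b ρ)).mul
      ((hasDerivAt_pow m (ρ:ℂ)).comp_ofReal)).mul (hasDerivAt_fsq hf ρ)
  convert h using 1; rfl; rfl
  simp only [kerD, ker, Pi.mul_apply]
  push_cast
  ring

lemma tendsto_ker_atTop {c₀ : ℝ} (hc₀ : 0 < c₀) {a : ℕ → ℝ} {f : ℝ → ℂ}
    (hd : Dc c₀ a f) (t b : ℝ) (m : ℕ) :
    Tendsto (ker t b m f) atTop (𝓝 0) := by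
  have hg : Tendsto (fun ρ : ℝ => (a 0 / c₀^m) * ((c₀*ρ)^m * Real.exp (-(c₀*ρ)))) atTop (𝓝 0) := by
    have h1 : Tendsto (fun ρ : ℝ => c₀*ρ) atTop atTop :=
      Tendsto.const_mul_atTop hc₀ tendsto_id
    have := (tendsto_pow_mul_exp_neg_atTop_nhds_zero m).comp h1
    simpa using this.const_mul (a 0 / c₀^m)
  refine squeeze_zero_norm' ?_ hg
  filter_upwards [eventually_ge_atTop (1:ℝ)] with ρ hρ
  have hρ0 : (0:ℝ) ≤ ρ := by linarith
  rw [norm_ker m f hρ0]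
  have hb := hd.2 0 (ρ^2) (by positivity)
  rw [iteratedDeriv_zero] at hb
  have he : Real.exp (-(c₀*ρ^2)) ≤ Real.exp (-(c₀*ρ)) := by
    apply Real.exp_le_exp.2
    have h1 : ρ ≤ ρ^2 := by nlinarith
    nlinarith [mul_le_mul_of_nonneg_left h1 hc₀.le]
  calc ρ^m * ‖f (ρ^2)‖ ≤ ρ^m * (a 0 * Real.exp (-(c₀*ρ^2))) :=
        mul_le_mul_of_nonneg_left hb (pow_nonneg hρ0 m)
    _ ≤ ρ^m * (a 0 * Real.exp (-(c₀*ρ))) := by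
        apply mul_le_mul_of_nonneg_left _ (pow_nonneg hρ0 m)
        exact mul_le_mul_of_nonneg_left he (hd.a_nonneg 0)
    _ = (a 0 / c₀^m) * ((c₀*ρ)^m * Real.exp (-(c₀*ρ))) := by
        rw [mul_pow]; field_simp

lemma integrableOn_kerD {c₀ : ℝ} (hc₀ : 0 < c₀) {a : ℕ → ℝ} {f : ℝ → ℂ}
    (hd : Dc c₀ a f) (t b : ℝ) (m : ℕ) :
    IntegrableOn (kerD t b m f) (Ioi 0) := by
  unfold kerD
  exact ((((integrableOn_ker hc₀ hd t b (m+1)).const_mul _).add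
      ((integrableOn_ker hc₀ hd t b m).const_mul _)).add
      ((integrableOn_ker hc₀ hd t b (m-1)).const_mul _)).add
      ((integrableOn_ker hc₀ hd.deriv t b (m+1)).const_mul _)

lemma recursion {c₀ : ℝ} (hc₀ : 0 < c₀) {a : ℕ → ℝ} {f : ℝ → ℂ}
    (hd : Dc c₀ a f) (t b : ℝ) (m : ℕ) :
    Complex.I*2*t*Jfun t b (m+1) f + Complex.I*b*Jfun t b m f + (m:ℂ)*Jfun t b (m-1) f
      + 2*Jfun t b (m+1) (_root_.deriv f) = -(if m = 0 then f 0 else 0) := by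
  have key : ∫ ρ in Ioi (0:ℝ), kerD t b m f ρ = 0 - ker t b m f 0 :=
    integral_Ioi_of_hasDerivAt_of_tendsto'
      (fun x _ => hasDerivAt_ker ((hd.1 1).differentiable one_ne_zero) t b m x)
      (integrableOn_kerD hc₀ hd t b m) (tendsto_ker_atTop hc₀ hd t b m)
  have expand : ∫ ρ in Ioi (0:ℝ), kerD t b m f ρ
      = Complex.I*2*t*Jfun t b (m+1) f + Complex.I*b*Jfun t b m f + (m:ℂ)*Jfun t b (m-1) f
        + 2*Jfun t b (m+1) (_root_.deriv f) := by
    unfold kerD Jfun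
    rw [integral_add, integral_add, integral_add]
    · rw [MeasureTheory.integral_const_mul, MeasureTheory.integral_const_mul,
        MeasureTheory.integral_const_mul, MeasureTheory.integral_const_mul]
    · exact (integrableOn_ker hc₀ hd t b (m+1)).const_mul _
    · exact (integrableOn_ker hc₀ hd t b m).const_mul _
    · exact ((integrableOn_ker hc₀ hd t b (m+1)).const_mul _).add
        ((integrableOn_ker hc₀ hd t b m).const_mul _)
    · exact (integrableOn_ker hc₀ hd t b (m-1)).const_mul _
    · exact (((integrableOn_ker hc₀ hd t b (m+1)).const_mul _).add
        ((integrableOn_ker hc₀ hd t b m).const_mul _)).add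
        ((integrableOn_ker hc₀ hd t b (m-1)).const_mul _)
    · exact (integrableOn_ker hc₀ hd.deriv t b (m+1)).const_mul _
  have hker0 : ker t b m f 0 = if m = 0 then f 0 else 0 := by
    rcases Nat.eq_zero_or_pos m with hm | hm
    · subst hm; simp [ker]
    · have h0 : m ≠ 0 := Nat.pos_iff_ne_zero.1 hm
      simp [ker, zero_pow h0, h0]
  rw [expand] at key
  rw [key, hker0]
  ring


def Dfun (t b : ℝ) (ρ : ℝ) : ℂ := Complex.I * ((2*t*ρ + b : ℝ) : ℂ)

def Gfun (t b : ℝ) (f : ℝ → ℂ) (ρ : ℝ) : ℂ := ker t b 0 f ρ * (Dfun t b ρ)⁻¹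

def Rfun (t b : ℝ) (f : ℝ → ℂ) (ρ : ℝ) : ℂ :=
  2*ker t b 1 (_root_.deriv f) ρ * (Dfun t b ρ)⁻¹
    - ker t b 0 f ρ * (Complex.I*2*t) / (Dfun t b ρ)^2

lemma norm_Dfun (t b ρ : ℝ) : ‖Dfun t b ρ‖ = |2*t*ρ+b| := by
  rw [Dfun, norm_mul, Complex.norm_I, one_mul, Complex.norm_real, Real.norm_eq_abs]

lemma hasDerivAt_Dfun (t b ρ : ℝ) : HasDerivAt (Dfun t b) (Complex.I*2*t) ρ := by
  have h : HasDerivAt (fun z : ℂ => Complex.I*(2*t*z+b)) (Complex.I*(2*t)) (ρ:ℂ) := by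
    have := (((hasDerivAt_id (ρ:ℂ)).const_mul ((2*t:ℝ):ℂ)).add_const ((b:ℝ):ℂ)).const_mul
      Complex.I
    convert this using 1; rfl; rfl
    · funext z; simp only [id_eq]; push_cast; ring
    · push_cast; ring
  have h2 := h.comp_ofReal
  have hEq : Dfun t b = fun y : ℝ => Complex.I*(2*t*(y:ℂ)+b) := by
    funext y; rw [Dfun]; push_cast; ring
  rw [hEq]
  convert h2 using 1; ring

lemma hasDerivAt_Gfun {f : ℝ → ℂ} (hdiff : Differentiable ℝ f) (t b x : ℝ)
    (hne : Dfun t b x ≠ 0) :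
    HasDerivAt (Gfun t b f) (ker t b 0 f x + Rfun t b f x) x := by
  have h1 := hasDerivAt_ker hdiff t b 0 x
  have h2 : HasDerivAt (fun y : ℝ => (Dfun t b y)⁻¹) (-(Complex.I*2*t) / (Dfun t b x)^2) x := by
    have hinv : HasDerivAt (fun y : ℂ => y⁻¹) (-((Dfun t b x)^2)⁻¹) (Dfun t b x) :=
      hasDerivAt_inv hne
    have h3 := HasDerivAt.scomp (h := Dfun t b) x hinv (hasDerivAt_Dfun t b x)
    convert h3 using 1; rfl; rfl
    rw [smul_eq_mul]
    field_simp
  have h := h1.mul h2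
  convert h using 1; rfl; rfl
  have hu : (Complex.I*((2*t*x+b:ℝ):ℂ)) * (Dfun t b x)⁻¹ = 1 := by
    have : Complex.I*((2*t*x+b:ℝ):ℂ) = Dfun t b x := rfl
    rw [this, mul_inv_cancel₀ hne]
  simp only [ker, kerD, Rfun, Dfun, div_eq_mul_inv, ← inv_pow, pow_zero, pow_one, mul_one,
    Nat.cast_zero, zero_mul] at hu ⊢
  push_cast at hu ⊢
  linear_combination (-(Complex.exp (Complex.I*(x:ℂ)^2*t) * Complex.exp (Complex.I*(x:ℂ)*b)
    * f (x^2))) * hu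

lemma tendsto_exp_term (c₀ : ℝ) (hc₀ : 0 < c₀) (K : ℝ) :
    Tendsto (fun ρ : ℝ => K * Real.exp (-(c₀*ρ))) atTop (𝓝 0) := by
  have h1 : Tendsto (fun ρ : ℝ => c₀*ρ) atTop atTop := Tendsto.const_mul_atTop hc₀ tendsto_id
  have := (tendsto_pow_mul_exp_neg_atTop_nhds_zero 0).comp h1
  simpa using this.const_mul K

set_option maxHeartbeats 2000000 in
lemma L0 {c₀ : ℝ} (hc₀ : 0 < c₀) {a : ℕ → ℝ} {f : ℝ → ℂ} (hd : Dc c₀ a f) :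
    ∃ C : ℝ, 0 ≤ C ∧ ∀ t b : ℝ, 1 ≤ t → |b| ≤ Real.sqrt t →
      ‖Jfun t b 0 f‖ ≤ C / Real.sqrt t := by
  set G₀ : ℝ := ∫ ρ in Ioi (0:ℝ), Real.exp (-(c₀*ρ^2)) with hG₀
  have hG₀nn : 0 ≤ G₀ := setIntegral_nonneg measurableSet_Ioi (fun x _ => (Real.exp_pos _).le)
  have hIG : IntegrableOn (fun ρ : ℝ => Real.exp (-(c₀*ρ^2))) (Ioi 0) := by
    have := integrableOn_dom hc₀ 0
    simpa using this
  have ha0 := hd.a_nonneg 0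
  have ha1 := hd.a_nonneg 1
  have hdiff : Differentiable ℝ f := (hd.1 1).differentiable one_ne_zero
  refine ⟨4*(a 0) + 2*(a 1)*G₀, by positivity, fun t b ht hb => ?_⟩
  have ht0 : (0:ℝ) < t := lt_of_lt_of_le one_pos ht
  set S := Real.sqrt t with hSdef
  have hS0 : 0 < S := Real.sqrt_pos.2 ht0
  have hS1 : 1 ≤ S := by
    rw [hSdef, show (1:ℝ) = Real.sqrt 1 by simp]
    exact Real.sqrt_le_sqrt ht
  have hSS : S * S = t := Real.mul_self_sqrt ht0.le
  set r := S⁻¹ with hrdef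
  have hr0 : 0 < r := inv_pos.2 hS0
  have htr : t * r = S := by
    rw [hrdef, ← hSS]; field_simp
  have hbneg : -S ≤ b := (abs_le.1 hb).1
  -- phase lower bound
  have hphi : ∀ ρ, r ≤ ρ → t * ρ ≤ 2*t*ρ + b := by
    intro ρ hρ
    have h1 : S ≤ t * ρ := by
      rw [← htr]
      exact mul_le_mul_of_nonneg_left hρ ht0.le
    nlinarith
  have htρpos : ∀ ρ, r ≤ ρ → 0 < t * ρ := fun ρ hρ => mul_pos ht0 (lt_of_lt_of_le hr0 hρ)
  have hDne : ∀ ρ, r ≤ ρ → Dfun t b ρ ≠ 0 := by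
    intro ρ hρ h0
    have h1 := norm_Dfun t b ρ
    rw [h0, norm_zero] at h1
    have h2 := hphi ρ hρ
    have h3 := htρpos ρ hρ
    have : 0 < |2*t*ρ+b| := lt_of_lt_of_le h3 (le_trans h2 (le_abs_self _))
    linarith [this, h1.symm.le]
  have hDinv : ∀ ρ, r ≤ ρ → ‖(Dfun t b ρ)⁻¹‖ ≤ (t*ρ)⁻¹ := by
    intro ρ hρ
    rw [norm_inv, norm_Dfun]
    apply inv_anti₀ (htρpos ρ hρ)
    exact le_trans (hphi ρ hρ) (le_abs_self _)
  -- pointwise bounds on f, deriv f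
  have hf0 : ∀ x : ℝ, ‖f (x^2)‖ ≤ a 0 * Real.exp (-(c₀*x^2)) := by
    intro x
    have := hd.2 0 (x^2) (by positivity)
    rwa [iteratedDeriv_zero] at this
  have hf1 : ∀ x : ℝ, ‖_root_.deriv f (x^2)‖ ≤ a 1 * Real.exp (-(c₀*x^2)) := by
    intro x
    have := hd.2 1 (x^2) (by positivity)
    rwa [iteratedDeriv_one] at this
  have hexp1 : ∀ x : ℝ, Real.exp (-(c₀*x^2)) ≤ 1 := by
    intro x
    rw [Real.exp_le_one_iff]
    nlinarith [sq_nonneg x, hc₀.le]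
  -- split the integral
  have hint_Ioc : IntegrableOn (ker t b 0 f) (Ioc 0 r) :=
    (integrableOn_ker hc₀ hd t b 0).mono_set Ioc_subset_Ioi_self
  have hint_Ioi : IntegrableOn (ker t b 0 f) (Ioi r) :=
    (integrableOn_ker hc₀ hd t b 0).mono_set (Ioi_subset_Ioi hr0.le)
  have hsplit : Jfun t b 0 f = (∫ ρ in Ioc 0 r, ker t b 0 f ρ) + ∫ ρ in Ioi r, ker t b 0 f ρ := by
    rw [Jfun, ← Set.Ioc_union_Ioi_eq_Ioi hr0.le,
      setIntegral_union (Set.Ioc_disjoint_Ioi le_rfl) measurableSet_Ioi hint_Ioc hint_Ioi]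
  -- head bound
  have hhead : ‖∫ ρ in Ioc 0 r, ker t b 0 f ρ‖ ≤ a 0 * r := by
    have h1 : ‖∫ ρ in Ioc 0 r, ker t b 0 f ρ‖ ≤ a 0 * (volume (Ioc (0:ℝ) r)).toReal := by
      apply norm_setIntegral_le_of_norm_le_const
      · rw [Real.volume_Ioc]; exact ENNReal.ofReal_lt_top
      · intro x hx
        rw [norm_ker 0 f (le_of_lt hx.1), pow_zero, one_mul]
        calc ‖f (x^2)‖ ≤ a 0 * Real.exp (-(c₀*x^2)) := hf0 x
          _ ≤ a 0 * 1 := mul_le_mul_of_nonneg_left (hexp1 x) ha0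
          _ = a 0 := mul_one _
    rwa [Real.volume_Ioc, sub_zero, ENNReal.toReal_ofReal hr0.le] at h1
  -- tail: integrands
  have hmeasR1 : IntegrableOn (fun ρ => 2*ker t b 1 (_root_.deriv f) ρ * (Dfun t b ρ)⁻¹)
      (Ioi r) := by
    apply Integrable.mono' ((hIG.mono_set (Ioi_subset_Ioi hr0.le)).const_mul (2*(a 1)/t))
    · apply ContinuousOn.aestronglyMeasurable _ measurableSet_Ioi
      apply ContinuousOn.mul
      · exact (continuous_const.mul (continuous_ker t b 1 (hd.deriv.1 0).continuous)).continuousOn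
      · apply ContinuousOn.inv₀
        · exact (Continuous.continuousOn (by unfold Dfun; fun_prop))
        · intro x hx; exact hDne x (le_of_lt hx)
    · filter_upwards [ae_restrict_mem measurableSet_Ioi] with ρ hρ
      have hρr : r ≤ ρ := le_of_lt hρ
      have hρ0 : (0:ℝ) < ρ := lt_of_lt_of_le hr0 hρr
      rw [norm_mul, norm_mul]
      have h1 : ‖ker t b 1 (_root_.deriv f) ρ‖ ≤ ρ * (a 1 * Real.exp (-(c₀*ρ^2))) := by
        rw [norm_ker 1 (_root_.deriv f) hρ0.le, pow_one]
        exact mul_le_mul_of_nonneg_left (hf1 ρ) hρ0.le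
      have h2 := hDinv ρ hρr
      have h3 := htρpos ρ hρr
      calc ‖(2:ℂ)‖ * ‖ker t b 1 (_root_.deriv f) ρ‖ * ‖(Dfun t b ρ)⁻¹‖
          ≤ 2 * (ρ * (a 1 * Real.exp (-(c₀*ρ^2)))) * (t*ρ)⁻¹ := by
            apply mul_le_mul _ h2 (norm_nonneg _) (by positivity)
            rw [Complex.norm_ofNat]
            exact mul_le_mul_of_nonneg_left h1 (by norm_num)
        _ = 2*(a 1)/t * Real.exp (-(c₀*ρ^2)) := by field_simp
  have hmeasR2 : IntegrableOn (fun ρ => ker t b 0 f ρ * (Complex.I*2*t) / (Dfun t b ρ)^2)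
      (Ioi r) := by
    apply Integrable.mono'
      (((integrableOn_Ioi_rpow_of_lt (by norm_num : (-2:ℝ) < -1) hr0)).const_mul (2*(a 0)/t))
    · apply ContinuousOn.aestronglyMeasurable _ measurableSet_Ioi
      apply ContinuousOn.div
      · exact ((continuous_ker t b 0 (hd.1 0).continuous).mul continuous_const).continuousOn
      · exact (Continuous.continuousOn (by unfold Dfun; fun_prop))
      · intro x hx; exact pow_ne_zero 2 (hDne x (le_of_lt hx))
    · filter_upwards [ae_restrict_mem measurableSet_Ioi] with ρ hρ
      have hρr : r ≤ ρ := le_of_lt hρ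
      have hρ0 : (0:ℝ) < ρ := lt_of_lt_of_le hr0 hρr
      have h3 := htρpos ρ hρr
      rw [norm_div, norm_mul]
      have hD2 : (t*ρ)^2 ≤ ‖(Dfun t b ρ)^2‖ := by
        rw [norm_pow, norm_Dfun]
        apply pow_le_pow_left₀ h3.le
        exact le_trans (hphi ρ hρr) (le_abs_self _)
      have hker : ‖ker t b 0 f ρ‖ ≤ a 0 := by
        rw [norm_ker 0 f hρ0.le, pow_zero, one_mul]
        calc ‖f (ρ^2)‖ ≤ a 0 * Real.exp (-(c₀*ρ^2)) := hf0 ρ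
        _ ≤ a 0 * 1 := mul_le_mul_of_nonneg_left (hexp1 ρ) ha0
        _ = a 0 := mul_one _
      have hI2t : ‖Complex.I*2*(t:ℂ)‖ = 2*t := by
        rw [norm_mul, norm_mul, Complex.norm_I, one_mul, Complex.norm_ofNat,
          Complex.norm_real, Real.norm_eq_abs, abs_of_pos ht0]
      calc ‖ker t b 0 f ρ‖ * ‖Complex.I*2*(t:ℂ)‖ / ‖(Dfun t b ρ)^2‖
          ≤ a 0 * (2*t) / (t*ρ)^2 := by
            apply div_le_div₀ (by positivity) _ (by positivity) hD2
            rw [hI2t]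
            exact mul_le_mul_of_nonneg_right hker (by positivity)
        _ = 2*(a 0)/t * ρ^(-2:ℝ) := by
            rw [show (-2:ℝ) = -((2:ℕ):ℝ) by norm_num, Real.rpow_neg hρ0.le, Real.rpow_natCast]
            field_simp
  have hintR : IntegrableOn (Rfun t b f) (Ioi r) := by
    unfold Rfun
    exact hmeasR1.sub hmeasR2
  -- FTC on the tail
  have hftc : ∫ ρ in Ioi r, (ker t b 0 f ρ + Rfun t b f ρ) = 0 - Gfun t b f r := by
    apply integral_Ioi_of_hasDerivAt_of_tendsto'
    · intro x hx
      exact hasDerivAt_Gfun hdiff t b x (hDne x hx)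
    · exact hint_Ioi.add hintR
    · refine squeeze_zero_norm' ?_ (tendsto_exp_term c₀ hc₀ (a 0 / S))
      filter_upwards [eventually_ge_atTop (max r 1)] with ρ hρ
      have hρr : r ≤ ρ := le_trans (le_max_left _ _) hρ
      have hρ1 : (1:ℝ) ≤ ρ := le_trans (le_max_right _ _) hρ
      have hρ0 : (0:ℝ) < ρ := lt_of_lt_of_le hr0 hρr
      rw [Gfun, norm_mul]
      have h1 : ‖ker t b 0 f ρ‖ ≤ a 0 * Real.exp (-(c₀*ρ)) := by
        rw [norm_ker 0 f hρ0.le, pow_zero, one_mul]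
        refine le_trans (hf0 ρ) (mul_le_mul_of_nonneg_left ?_ ha0)
        apply Real.exp_le_exp.2
        have h1 : ρ ≤ ρ^2 := by nlinarith
        nlinarith [mul_le_mul_of_nonneg_left h1 hc₀.le]
      have h2 : ‖(Dfun t b ρ)⁻¹‖ ≤ S⁻¹ := by
        refine le_trans (hDinv ρ hρr) ?_
        rw [← htr]
        apply inv_anti₀ (by rw [htr]; exact hS0)
        exact mul_le_mul_of_nonneg_left hρr ht0.le
      calc ‖ker t b 0 f ρ‖ * ‖(Dfun t b ρ)⁻¹‖
          ≤ (a 0 * Real.exp (-(c₀*ρ))) * S⁻¹ :=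
            mul_le_mul h1 h2 (norm_nonneg _) (by positivity)
        _ = (a 0 / S) * Real.exp (-(c₀*ρ)) := by ring
  have htail_eq : ∫ ρ in Ioi r, ker t b 0 f ρ
      = (0 - Gfun t b f r) - ∫ ρ in Ioi r, Rfun t b f ρ := by
    rw [← hftc, integral_add hint_Ioi hintR]
    ring
  -- bound on G r
  have hGr : ‖Gfun t b f r‖ ≤ a 0 / S := by
    rw [Gfun, norm_mul]
    have h1 : ‖ker t b 0 f r‖ ≤ a 0 := by
      rw [norm_ker 0 f hr0.le, pow_zero, one_mul]
      calc ‖f (r^2)‖ ≤ a 0 * Real.exp (-(c₀*r^2)) := hf0 r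
        _ ≤ a 0 * 1 := mul_le_mul_of_nonneg_left (hexp1 r) ha0
        _ = a 0 := mul_one _
    have h2 : ‖(Dfun t b r)⁻¹‖ ≤ S⁻¹ := by
      refine le_trans (hDinv r le_rfl) ?_
      rw [htr]
    calc ‖ker t b 0 f r‖ * ‖(Dfun t b r)⁻¹‖ ≤ a 0 * S⁻¹ :=
          mul_le_mul h1 h2 (norm_nonneg _) ha0
      _ = a 0 / S := by ring
  -- bound on ∫ R
  have hbd1 : ∀ᵐ ρ ∂(volume.restrict (Ioi r)),
      ‖2*ker t b 1 (_root_.deriv f) ρ * (Dfun t b ρ)⁻¹‖ ≤ 2*(a 1)/t * Real.exp (-(c₀*ρ^2)) := by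
    filter_upwards [ae_restrict_mem measurableSet_Ioi] with ρ hρ
    have hρr : r ≤ ρ := le_of_lt hρ
    have hρ0 : (0:ℝ) < ρ := lt_of_lt_of_le hr0 hρr
    rw [norm_mul, norm_mul]
    have h1 : ‖ker t b 1 (_root_.deriv f) ρ‖ ≤ ρ * (a 1 * Real.exp (-(c₀*ρ^2))) := by
      rw [norm_ker 1 (_root_.deriv f) hρ0.le, pow_one]
      exact mul_le_mul_of_nonneg_left (hf1 ρ) hρ0.le
    have h2 := hDinv ρ hρr
    have h3 := htρpos ρ hρr
    calc ‖(2:ℂ)‖ * ‖ker t b 1 (_root_.deriv f) ρ‖ * ‖(Dfun t b ρ)⁻¹‖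
        ≤ 2 * (ρ * (a 1 * Real.exp (-(c₀*ρ^2)))) * (t*ρ)⁻¹ := by
          apply mul_le_mul _ h2 (norm_nonneg _) (by positivity)
          rw [Complex.norm_ofNat]
          exact mul_le_mul_of_nonneg_left h1 (by norm_num)
      _ = 2*(a 1)/t * Real.exp (-(c₀*ρ^2)) := by field_simp
  have hbd2 : ∀ᵐ ρ ∂(volume.restrict (Ioi r)),
      ‖ker t b 0 f ρ * (Complex.I*2*t) / (Dfun t b ρ)^2‖ ≤ 2*(a 0)/t * ρ^(-2:ℝ) := by
    filter_upwards [ae_restrict_mem measurableSet_Ioi] with ρ hρ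
    have hρr : r ≤ ρ := le_of_lt hρ
    have hρ0 : (0:ℝ) < ρ := lt_of_lt_of_le hr0 hρr
    have h3 := htρpos ρ hρr
    rw [norm_div, norm_mul]
    have hD2 : (t*ρ)^2 ≤ ‖(Dfun t b ρ)^2‖ := by
      rw [norm_pow, norm_Dfun]
      apply pow_le_pow_left₀ h3.le
      exact le_trans (hphi ρ hρr) (le_abs_self _)
    have hker : ‖ker t b 0 f ρ‖ ≤ a 0 := by
      rw [norm_ker 0 f hρ0.le, pow_zero, one_mul]
      calc ‖f (ρ^2)‖ ≤ a 0 * Real.exp (-(c₀*ρ^2)) := hf0 ρ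
        _ ≤ a 0 * 1 := mul_le_mul_of_nonneg_left (hexp1 ρ) ha0
        _ = a 0 := mul_one _
    have hI2t : ‖Complex.I*2*(t:ℂ)‖ = 2*t := by
      rw [norm_mul, norm_mul, Complex.norm_I, one_mul, Complex.norm_ofNat,
        Complex.norm_real, Real.norm_eq_abs, abs_of_pos ht0]
    calc ‖ker t b 0 f ρ‖ * ‖Complex.I*2*(t:ℂ)‖ / ‖(Dfun t b ρ)^2‖
        ≤ a 0 * (2*t) / (t*ρ)^2 := by
          apply div_le_div₀ (by positivity) _ (by positivity) hD2
          rw [hI2t]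
          exact mul_le_mul_of_nonneg_right hker (by positivity)
      _ = 2*(a 0)/t * ρ^(-2:ℝ) := by
          rw [show (-2:ℝ) = -((2:ℕ):ℝ) by norm_num, Real.rpow_neg hρ0.le, Real.rpow_natCast]
          field_simp
  have hRval : ∫ ρ in Ioi r, Rfun t b f ρ
      = (∫ ρ in Ioi r, 2*ker t b 1 (_root_.deriv f) ρ * (Dfun t b ρ)⁻¹)
        - ∫ ρ in Ioi r, ker t b 0 f ρ * (Complex.I*2*t) / (Dfun t b ρ)^2 := by
    unfold Rfun
    exact integral_sub hmeasR1 hmeasR2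
  have hT1 : ‖∫ ρ in Ioi r, 2*ker t b 1 (_root_.deriv f) ρ * (Dfun t b ρ)⁻¹‖
      ≤ 2*(a 1)/t * G₀ := by
    refine le_trans (norm_integral_le_of_norm_le
      ((hIG.mono_set (Ioi_subset_Ioi hr0.le)).const_mul (2*(a 1)/t)) hbd1) ?_
    rw [MeasureTheory.integral_const_mul]
    apply mul_le_mul_of_nonneg_left _ (by positivity)
    apply setIntegral_mono_set hIG
    · filter_upwards [ae_restrict_mem measurableSet_Ioi] with x _
      positivity
    · exact HasSubset.Subset.eventuallyLE (Ioi_subset_Ioi hr0.le)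
  have hT2 : ‖∫ ρ in Ioi r, ker t b 0 f ρ * (Complex.I*2*t) / (Dfun t b ρ)^2‖
      ≤ 2*(a 0)/t * S := by
    refine le_trans (norm_integral_le_of_norm_le
      ((integrableOn_Ioi_rpow_of_lt (by norm_num : (-2:ℝ) < -1) hr0).const_mul (2*(a 0)/t))
      hbd2) ?_
    rw [MeasureTheory.integral_const_mul]
    apply mul_le_mul_of_nonneg_left _ (by positivity)
    rw [integral_Ioi_rpow_of_lt (by norm_num : (-2:ℝ) < -1) hr0]
    have : (-2:ℝ) + 1 = -1 := by norm_num
    rw [this]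
    rw [show -r ^ (-1:ℝ) / (-1) = r ^ (-1:ℝ) by ring]
    rw [Real.rpow_neg_one, hrdef, inv_inv]
  have hR1 : ‖∫ ρ in Ioi r, Rfun t b f ρ‖ ≤ 2*(a 1)/t * G₀ + 2*(a 0)/t * S := by
    rw [hRval]
    exact le_trans (norm_sub_le _ _) (add_le_add hT1 hT2)
  -- assemble
  have e1 : a 0 * r = a 0 / S := by rw [hrdef, division_def]
  have e2 : 2*(a 1)/t * G₀ ≤ 2*(a 1)*G₀/S := by
    rw [← hSS]
    rw [show 2*(a 1)/(S*S)*G₀ = 2*(a 1)*G₀/(S*S) by ring]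
    apply div_le_div_of_nonneg_left (by positivity) hS0
    nlinarith
  have e3 : 2*(a 0)/t * S = 2*(a 0)/S := by
    rw [← hSS]; field_simp
  have htail : ‖∫ ρ in Ioi r, ker t b 0 f ρ‖ ≤ a 0 / S + (2*(a 1)/t * G₀ + 2*(a 0)/t * S) := by
    rw [htail_eq, zero_sub]
    refine le_trans (norm_sub_le _ _) ?_
    rw [norm_neg]
    exact add_le_add hGr hR1
  rw [hsplit]
  refine le_trans (norm_add_le _ _) ?_
  have := add_le_add (le_trans hhead e1.le) htail
  refine le_trans this ?_
  rw [e3] at *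
  have hfin : a 0 / S + (a 0 / S + (2*(a 1)/t * G₀ + 2*(a 0)/S))
      ≤ (4*(a 0) + 2*(a 1)*G₀)/S := by
    have h4 : (4*(a 0) + 2*(a 1)*G₀)/S = 4*(a 0)/S + 2*(a 1)*G₀/S := by ring
    rw [h4]
    have : a 0 / S + (a 0 / S + (2*(a 1)/t * G₀ + 2*(a 0)/S)) 
        = 4*(a 0)/S + 2*(a 1)/t*G₀ := by ring
    rw [this]
    linarith [e2]
  exact hfin

lemma piece {q : ℝ} (hq : 1 ≤ q) {c : ℝ} (hc : 0 ≤ c) {u v E : ℕ} (h : u + E ≤ v + 2) :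
    c * q^u / q^v ≤ c * (q*q) / q^E := by
  have q0 : 0 < q := lt_of_lt_of_le one_pos hq
  rw [div_le_div_iff₀ (by positivity) (by positivity)]
  calc c * q^u * q^E = c * q^(u+E) := by rw [pow_add]; ring
    _ ≤ c * q^(v+2) := mul_le_mul_of_nonneg_left (pow_le_pow_right₀ hq h) hc
    _ = c * (q*q) * q^v := by rw [pow_add]; ring

set_option maxHeartbeats 1000000 in
lemma key {c₀ : ℝ} (hc₀ : 0 < c₀) :
    ∀ n : ℕ, ∀ (l : ℕ) (a : ℕ → ℝ) (f : ℝ → ℂ), Dc c₀ a f →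
      ∃ C : ℝ, 0 ≤ C ∧ ∀ t b : ℝ, 1 ≤ t → |b| ≤ Real.sqrt t →
        ‖Jfun t b l f‖ ≤ C / Real.sqrt t ^ (min n (l+1)) := by
  intro n
  induction n with
  | zero =>
    intro l a f hd
    refine ⟨a 0 * ∫ ρ in Ioi (0:ℝ), ρ^l * Real.exp (-(c₀*ρ^2)), ?_, fun t b ht hb => ?_⟩
    · apply mul_nonneg (hd.a_nonneg 0)
      apply setIntegral_nonneg measurableSet_Ioi
      intro x hx
      have : (0:ℝ) < x := hx
      positivity
    · rw [Nat.zero_min, pow_zero, div_one]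
      exact norm_J_le hc₀ hd t b l
  | succ n ih =>
    intro l a f hd
    match l with
    | 0 =>
      obtain ⟨C, hCn, hC⟩ := L0 hc₀ hd
      refine ⟨C, hCn, fun t b ht hb => ?_⟩
      have := hC t b ht hb
      simpa using this
    | (m+1) =>
      obtain ⟨C1, hC1n, hC1⟩ := ih m a f hd
      obtain ⟨C2, hC2n, hC2⟩ := ih (m-1) a f hd
      obtain ⟨C3, hC3n, hC3⟩ := ih (m+1) (fun k => a (k+1)) (_root_.deriv f) hd.deriv
      have ha0 := hd.a_nonneg 0
      refine ⟨(a 0 + C1 + m*C2 + 2*C3)/2, by positivity, fun t b ht hb => ?_⟩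
      have ht0 : (0:ℝ) < t := lt_of_lt_of_le one_pos ht
      set q := Real.sqrt t with hqdef
      have hq0 : 0 < q := Real.sqrt_pos.2 ht0
      have hq1 : 1 ≤ q := by
        rw [hqdef, show (1:ℝ) = Real.sqrt 1 by simp]
        exact Real.sqrt_le_sqrt ht
      have hqq : q * q = t := Real.mul_self_sqrt ht0.le
      set E := min (n+1) (m+2) with hEdef
      -- recursion
      have hrec := recursion hc₀ hd t b m
      have hJeq : Complex.I*2*(t:ℂ)*Jfun t b (m+1) f
          = -(if m = 0 then f 0 else 0) - Complex.I * (b:ℂ) * Jfun t b m f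
            - (m:ℂ)*Jfun t b (m-1) f - 2*Jfun t b (m+1) (_root_.deriv f) := by
        linear_combination hrec
      have hI2t : ‖Complex.I*2*(t:ℂ)‖ = 2*t := by
        rw [norm_mul, norm_mul, Complex.norm_I, one_mul, Complex.norm_ofNat,
          Complex.norm_real, Real.norm_eq_abs, abs_of_pos ht0]
      have hIb : ‖Complex.I*(b:ℂ)‖ = |b| := by
        rw [norm_mul, Complex.norm_I, one_mul, Complex.norm_real, Real.norm_eq_abs]
      have hB0 : ‖(if m = 0 then f 0 else 0 : ℂ)‖ ≤ a 0 * (q*q) / q^E := by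
        rcases Nat.eq_zero_or_pos m with hm | hm
        · subst hm
          simp only [if_pos rfl]
          have h1 : ‖f 0‖ ≤ a 0 := by
            have := hd.2 0 0 le_rfl
            rwa [iteratedDeriv_zero, mul_zero, neg_zero, Real.exp_zero, mul_one] at this
          refine le_trans h1 ?_
          have := piece hq1 ha0 (u := 0) (v := 0) (E := E) (by omega)
          simpa using this
        · rw [if_neg (Nat.pos_iff_ne_zero.1 hm)]
          rw [norm_zero]
          positivity
      have hT1 : |b| * ‖Jfun t b m f‖ ≤ C1 * (q*q) / q^E := by
        have h1 : |b| * ‖Jfun t b m f‖ ≤ q * (C1 / q^(min n (m+1))) := by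
          apply mul_le_mul hb (hC1 t b ht hb) (norm_nonneg _) hq0.le
        refine le_trans h1 ?_
        have h2 := piece hq1 hC1n (u := 1) (v := min n (m+1)) (E := E) (by omega)
        calc q * (C1 / q^(min n (m+1))) = C1 * q^1 / q^(min n (m+1)) := by
              rw [pow_one]; ring
          _ ≤ C1 * (q*q) / q^E := h2
      have hT2 : (m:ℝ) * ‖Jfun t b (m-1) f‖ ≤ (m:ℝ)*C2 * (q*q) / q^E := by
        have h1 : (m:ℝ) * ‖Jfun t b (m-1) f‖ ≤ (m:ℝ) * (C2 / q^(min n (m-1+1))) :=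
          mul_le_mul_of_nonneg_left (hC2 t b ht hb) (Nat.cast_nonneg m)
        refine le_trans h1 ?_
        have h2 := piece hq1 (mul_nonneg (Nat.cast_nonneg m : (0:ℝ) ≤ m) hC2n)
          (u := 0) (v := min n (m-1+1)) (E := E) (by omega)
        calc (m:ℝ) * (C2 / q^(min n (m-1+1))) = (m:ℝ)*C2 * q^0 / q^(min n (m-1+1)) := by
              rw [pow_zero]; ring
          _ ≤ (m:ℝ)*C2 * (q*q) / q^E := h2
      have hT3 : 2 * ‖Jfun t b (m+1) (_root_.deriv f)‖ ≤ 2*C3 * (q*q) / q^E := by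
        have h1 : 2 * ‖Jfun t b (m+1) (_root_.deriv f)‖ ≤ 2 * (C3 / q^(min n (m+1+1))) :=
          mul_le_mul_of_nonneg_left (hC3 t b ht hb) (by norm_num)
        refine le_trans h1 ?_
        have h2 := piece hq1 (mul_nonneg (by norm_num : (0:ℝ) ≤ 2) hC3n)
          (u := 0) (v := min n (m+1+1)) (E := E) (by omega)
        calc 2 * (C3 / q^(min n (m+1+1))) = 2*C3 * q^0 / q^(min n (m+1+1)) := by
              rw [pow_zero]; ring
          _ ≤ 2*C3 * (q*q) / q^E := h2
      -- combine
      have hmain : 2*t*‖Jfun t b (m+1) f‖ ≤ (a 0 + C1 + (m:ℝ)*C2 + 2*C3) * (q*q) / q^E := by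
        have h1 : ‖Complex.I*2*(t:ℂ)*Jfun t b (m+1) f‖ = 2*t*‖Jfun t b (m+1) f‖ := by
          rw [norm_mul, hI2t]
        have h2 : ‖Complex.I*2*(t:ℂ)*Jfun t b (m+1) f‖
            ≤ ‖(if m = 0 then f 0 else 0 : ℂ)‖ + (|b|) * ‖Jfun t b m f‖
              + (m:ℝ)*‖Jfun t b (m-1) f‖ + 2*‖Jfun t b (m+1) (_root_.deriv f)‖ := by
          rw [hJeq]
          refine le_trans (norm_sub_le _ _) (add_le_add (le_trans (norm_sub_le _ _)
            (add_le_add (le_trans (norm_sub_le _ _) (add_le_add ?_ ?_)) ?_)) ?_)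
          · rw [norm_neg]
          · rw [norm_mul, hIb]
          · rw [norm_mul, Complex.norm_natCast]
          · rw [norm_mul, Complex.norm_ofNat]
        rw [← h1]
        refine le_trans h2 ?_
        have := add_le_add (add_le_add (add_le_add hB0 hT1) hT2) hT3
        refine le_trans this ?_
        rw [show (a 0 + C1 + (m:ℝ)*C2 + 2*C3) * (q*q) / q^E
          = a 0*(q*q)/q^E + C1*(q*q)/q^E + (m:ℝ)*C2*(q*q)/q^E + 2*C3*(q*q)/q^E by ring]
      -- divide
      have hqE : (0:ℝ) < q^E := pow_pos hq0 E
      rw [← sub_nonneg] at hmain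
      rw [← sub_nonneg]
      have hfinal : (a 0 + C1 + (m:ℝ)*C2 + 2*C3)/2 / q^E
          - ‖Jfun t b (m+1) f‖
          = ((a 0 + C1 + (m:ℝ)*C2 + 2*C3) * (q*q) / q^E - 2*t*‖Jfun t b (m+1) f‖) / (2*t) := by
        rw [← hqq]
        field_simp
      rw [hfinal]
      positivity

lemma rpow_half_pow {x : ℝ} (hx : 0 < x) (k : ℕ) :
    x ^ (-((k:ℝ))/2) = (Real.sqrt x ^ k)⁻¹ := by
  rw [← Real.rpow_natCast (Real.sqrt x) k, Real.sqrt_eq_rpow,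
    ← Real.rpow_mul hx.le, ← Real.rpow_neg hx.le]
  norm_num
  rw [show -(k:ℝ)/2 = -(1/2*(k:ℝ)) by ring]

end Stmt16

open Stmt16 in
set_option maxHeartbeats 1000000 in
theorem stmt16
    (c₀ : ℝ) (hc₀ : 0 < c₀) (a : ℕ → ℝ) (ha : ∀ k, 0 < a k)
    (f : ℝ → ℂ) (hf : ContDiff ℝ (⊤ : ℕ∞) f)
    (hfb : ∀ (k : ℕ) (ρ : ℝ), 0 ≤ ρ → ‖iteratedDeriv k f ρ‖ ≤ a k * Real.exp (-(c₀ * ρ)))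
    (h : ℝ → ℂ) (hh : ContDiffOn ℝ (⊤ : ℕ∞) h (Set.Icc 0 (2*π))) :
    ∃ ε₀ : ℝ, 0 < ε₀ ∧ ∃ C : ℕ → ℝ,
      ∀ y : ℝ → ℝ, ContDiff ℝ (⊤ : ℕ∞) y →
        (∀ t : ℝ, 0 < t → |y t| ≤ ε₀ * t ^ ((1:ℝ)/2)) →
        ∀ (l : ℕ) (t : ℝ), 0 < t →
          ‖(∫ θ in (0:ℝ)..(2*π), h θ *
              ∫ ρ in Set.Ioi (0:ℝ),
                Complex.exp (Complex.I * (ρ:ℂ)^2 * (t:ℂ)) *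
                Complex.exp (Complex.I * (ρ:ℂ) * ((Real.cos θ : ℝ) : ℂ) * ((y t : ℝ) : ℂ)) *
                (ρ:ℂ)^l * f (ρ^2))‖
            ≤ C l * (1+t) ^ (-((l:ℝ)+1)/2) := by
  classical
  have hd : Dc c₀ a f := ⟨fun n => hf.of_le (by exact_mod_cast le_top), hfb⟩
  have hkey : ∀ l : ℕ, ∃ C, 0 ≤ C ∧ ∀ t b : ℝ, 1 ≤ t → |b| ≤ Real.sqrt t →
      ‖Jfun t b l f‖ ≤ C / Real.sqrt t ^ (l+1) := by
    intro l
    obtain ⟨C, h0, h1⟩ := key hc₀ (l+1) l a f hd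
    exact ⟨C, h0, fun t b ht hb => by simpa [min_self] using h1 t b ht hb⟩
  choose Ck hCk0 hCk using hkey
  set A : ℕ → ℝ := fun l => a 0 * ∫ ρ in Set.Ioi (0:ℝ), ρ^l * Real.exp (-(c₀*ρ^2)) with hA
  have hA0 : ∀ l, 0 ≤ A l := by
    intro l
    apply mul_nonneg (hd.a_nonneg 0)
    apply setIntegral_nonneg measurableSet_Ioi
    intro x hx
    have hx0 : (0:ℝ) < x := hx
    positivity
  have hAb : ∀ (l : ℕ) (t b : ℝ), ‖Jfun t b l f‖ ≤ A l := fun l t b => norm_J_le hc₀ hd t b l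
  obtain ⟨M, hM⟩ := (isCompact_Icc (a := (0:ℝ)) (b := 2*π)).exists_bound_of_continuousOn
    hh.continuousOn
  set Mx := max M 0 with hMx
  have hMx0 : 0 ≤ Mx := le_max_right _ _
  have hMb : ∀ θ ∈ Set.Icc (0:ℝ) (2*π), ‖h θ‖ ≤ Mx := fun θ hθ =>
    le_trans (hM θ hθ) (le_max_left _ _)
  refine ⟨1, one_pos, fun l => 2*π*Mx*(Real.sqrt 2)^(l+1)*(Ck l + A l),
    fun y hy hyb l t ht => ?_⟩
  have hπ : (0:ℝ) < 2*π := by positivity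
  have hinner : ∀ θ : ℝ,
      (∫ ρ in Set.Ioi (0:ℝ),
        Complex.exp (Complex.I * (ρ:ℂ)^2 * (t:ℂ)) *
        Complex.exp (Complex.I * (ρ:ℂ) * ((Real.cos θ : ℝ) : ℂ) * ((y t : ℝ) : ℂ)) *
        (ρ:ℂ)^l * f (ρ^2)) = Jfun t (Real.cos θ * y t) l f := by
    intro θ
    rw [Jfun]
    congr 1
    funext ρ
    rw [Stmt16.ker]
    congr 3
    push_cast
    ring
  set b2 : ℝ → ℝ := fun θ => Real.cos θ * y t with hb2
  set R : ℝ := (Real.sqrt 2)^(l+1) with hR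
  set Q : ℝ := Real.sqrt (1+t) ^ (l+1) with hQ
  have hQpos : 0 < Q := by
    have : 0 < Real.sqrt (1+t) := Real.sqrt_pos.2 (by linarith)
    positivity
  have hRpos : (0:ℝ) < R := by
    have : 0 < Real.sqrt 2 := Real.sqrt_pos.2 (by norm_num)
    positivity
  have hJb : ∀ θ : ℝ, ‖Jfun t (b2 θ) l f‖ ≤ R*(Ck l + A l) / Q := by
    intro θ
    rcases le_or_gt 1 t with h1t | h1t
    · have hbb : |b2 θ| ≤ Real.sqrt t := by
        rw [hb2, abs_mul]
        have h1 := hyb t ht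
        rw [one_mul] at h1
        have h2 : t ^ ((1:ℝ)/2) = Real.sqrt t := (Real.sqrt_eq_rpow t).symm
        rw [h2] at h1
        calc |Real.cos θ| * |y t| ≤ 1 * |y t| :=
              mul_le_mul_of_nonneg_right (Real.abs_cos_le_one θ) (abs_nonneg _)
          _ = |y t| := one_mul _
          _ ≤ Real.sqrt t := h1
      have hJ := hCk l t (b2 θ) h1t hbb
      have hPpos : 0 < Real.sqrt t ^ (l+1) := by
        have : 0 < Real.sqrt t := Real.sqrt_pos.2 ht
        positivity
      have hQle : Q ≤ R * Real.sqrt t ^ (l+1) := by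
        rw [hQ, hR, ← mul_pow]
        apply pow_le_pow_left₀ (Real.sqrt_nonneg _)
        rw [← Real.sqrt_mul (by norm_num : (0:ℝ) ≤ 2)]
        apply Real.sqrt_le_sqrt
        linarith
      refine le_trans hJ ?_
      rw [div_le_div_iff₀ hPpos hQpos]
      calc Ck l * Q ≤ Ck l * (R * Real.sqrt t ^ (l+1)) :=
            mul_le_mul_of_nonneg_left hQle (hCk0 l)
        _ ≤ R*(Ck l + A l) * Real.sqrt t ^ (l+1) := by
            have h3 : Ck l * R ≤ R * (Ck l + A l) := by
              rw [mul_comm]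
              exact mul_le_mul_of_nonneg_left (le_add_of_nonneg_right (hA0 l)) hRpos.le
            calc Ck l * (R * Real.sqrt t ^ (l+1)) = (Ck l * R) * Real.sqrt t ^ (l+1) := by
                  ring
              _ ≤ R*(Ck l + A l) * Real.sqrt t ^ (l+1) :=
                  mul_le_mul_of_nonneg_right h3 hPpos.le
    · have hJ := hAb l t (b2 θ)
      have hQle : Q ≤ R := by
        rw [hQ, hR]
        apply pow_le_pow_left₀ (Real.sqrt_nonneg _)
        apply Real.sqrt_le_sqrt
        linarith
      refine le_trans hJ ?_
      rw [le_div_iff₀ hQpos]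
      calc A l * Q ≤ A l * R := mul_le_mul_of_nonneg_left hQle (hA0 l)
        _ ≤ R*(Ck l + A l) := by
            rw [mul_comm]
            exact mul_le_mul_of_nonneg_left (le_add_of_nonneg_left (hCk0 l)) hRpos.le
  have houter : ‖∫ θ in (0:ℝ)..(2*π), h θ *
      ∫ ρ in Set.Ioi (0:ℝ),
        Complex.exp (Complex.I * (ρ:ℂ)^2 * (t:ℂ)) *
        Complex.exp (Complex.I * (ρ:ℂ) * ((Real.cos θ : ℝ) : ℂ) * ((y t : ℝ) : ℂ)) *
        (ρ:ℂ)^l * f (ρ^2)‖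
      ≤ (Mx * (R*(Ck l + A l) / Q)) * |2*π - 0| := by
    apply intervalIntegral.norm_integral_le_of_norm_le_const
    intro θ hθ
    rw [Set.uIoc_of_le hπ.le] at hθ
    have hθIcc : θ ∈ Set.Icc (0:ℝ) (2*π) := Set.Ioc_subset_Icc_self hθ
    rw [norm_mul, hinner θ]
    exact mul_le_mul (hMb θ hθIcc) (hJb θ) (norm_nonneg _) hMx0
  refine le_trans houter ?_
  have hexp : (1+t) ^ (-((l:ℝ)+1)/2) = Q⁻¹ := by
    rw [hQ]
    have := rpow_half_pow (x := 1+t) (by linarith) (l+1)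
    rw [← this]
    push_cast
    ring_nf
  rw [hexp]
  rw [abs_of_pos (by linarith : (0:ℝ) < 2*π - 0)]
  rw [show (2*π - 0) = 2*π by ring]
  rw [show Mx * (R*(Ck l + A l) / Q) * (2*π) = 2*π*Mx*R*(Ck l + A l) * Q⁻¹ by
    field_simp]
end
end

section
/- For every δ ∈ (0, 1/2): (1/(δ(1−2δ)√π)) ∫₀^∞ e^{−t} t^{−δ} dt ≠ ∫₀^∞ e^{−t} t^{−1/2−δ} dt; equivalently, Γ(1−δ) ≠ δ(1−2δ)√π · Γ(1/2−δ). (Consequently, no solution q of the linear integro-differential equation ∂_t q(t) = Z M(t) ∫₀^t q(s) ds − Z ∫₀^t M(t−s) q(s) ds with q(0) = 1 can have the asymptotic form q(t) = C t^{−1/2−δ} + O(t^{−1/2−δ−ε}) with C ≠ 0 for any δ ∈ (0,1/2) and ε > 0.) -/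
/-!
Put `x = 1/2 - δ`; the claim becomes `√π (1 - 2x) Γ(x + 1) < Γ(x + 1/2)` for `0 < x < 1/2`.
Legendre's duplication formula gives `Γ(x + 1/2) Γ(x + 1) = 2^(-2x) √π Γ(2x + 1)`, and
log-convexity of `Γ` gives `Γ(x + 1)² ≤ Γ(1) Γ(2x + 1)`, so `Γ(x + 1/2) ≥ 2^(-2x) √π Γ(x + 1)`.
Finally `1 - 2x < 2^(-2x)` by convexity of the exponential.
-/

open MeasureTheory Real

lemma one_sub_lt_two_rpow_neg {y : ℝ} (hy : 0 < y) : 1 - y < (2 : ℝ) ^ (-y) := by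
  have hlog : log 2 < 1 := by linarith [log_two_lt_d9]
  calc 1 - y < 1 - y * log 2 := by nlinarith
    _ < exp (-y * log 2) := by
        linarith [add_one_lt_exp (x := -y * log 2) (by nlinarith [log_pos one_lt_two])]
    _ = (2 : ℝ) ^ (-y) := by rw [rpow_def_of_pos two_pos, mul_comm]

namespace Real

lemma Gamma_add_one_sq_le {x : ℝ} (hx : -1/2 < x) : Gamma (x + 1) ^ 2 ≤ Gamma (2 * x + 1) := by
  have hconv := Gamma_mul_add_mul_le_rpow_Gamma_mul_rpow_Gamma one_pos
    (show 0 < 2 * x + 1 by linarith) one_half_pos one_half_pos (add_halves 1)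
  rw [show 1 / 2 * 1 + 1 / 2 * (2 * x + 1) = x + 1 by ring, Gamma_one, one_rpow, one_mul,
    ← sqrt_eq_rpow] at hconv
  calc Gamma (x + 1) ^ 2 ≤ √(Gamma (2 * x + 1)) ^ 2 :=
        pow_le_pow_left₀ (Gamma_pos_of_pos (by linarith)).le hconv 2
    _ = Gamma (2 * x + 1) := sq_sqrt (Gamma_pos_of_pos (by linarith)).le

lemma Gamma_add_half_mul_Gamma_add_one (x : ℝ) :
    Gamma (x + 1/2) * Gamma (x + 1) = Gamma (2 * x + 1) * 2 ^ (-(2 * x)) * √π := by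
  have h := Gamma_mul_Gamma_add_half (x + 1/2)
  rwa [show x + 1/2 + 1/2 = x + 1 by ring, show 1 - 2 * (x + 1/2) = -(2 * x) by ring,
    show 2 * (x + 1/2) = 2 * x + 1 by ring] at h

lemma sqrt_pi_mul_two_rpow_mul_Gamma_add_one_le {x : ℝ} (hx : -1/2 < x) :
    √π * 2 ^ (-(2 * x)) * Gamma (x + 1) ≤ Gamma (x + 1/2) := by
  have hΓ : 0 < Gamma (x + 1) := Gamma_pos_of_pos (by linarith)
  refine le_of_mul_le_mul_right ?_ hΓ
  calc √π * 2 ^ (-(2 * x)) * Gamma (x + 1) * Gamma (x + 1)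
      = √π * 2 ^ (-(2 * x)) * Gamma (x + 1) ^ 2 := by ring
    _ ≤ √π * 2 ^ (-(2 * x)) * Gamma (2 * x + 1) := by gcongr; exact Gamma_add_one_sq_le hx
    _ = Gamma (x + 1/2) * Gamma (x + 1) := by rw [Gamma_add_half_mul_Gamma_add_one]; ring

lemma sqrt_pi_mul_one_sub_two_mul_mul_Gamma_add_one_lt {x : ℝ} (hx : 0 < x) :
    √π * (1 - 2 * x) * Gamma (x + 1) < Gamma (x + 1/2) := by
  have hΓ : 0 < Gamma (x + 1) := Gamma_pos_of_pos (by linarith)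
  calc √π * (1 - 2 * x) * Gamma (x + 1) < √π * 2 ^ (-(2 * x)) * Gamma (x + 1) := by
        gcongr; exact one_sub_lt_two_rpow_neg (by linarith)
    _ ≤ Gamma (x + 1/2) := sqrt_pi_mul_two_rpow_mul_Gamma_add_one_le (by linarith)

lemma mul_one_sub_two_mul_mul_sqrt_pi_mul_Gamma_lt {δ : ℝ} (hδ : δ < 1/2) :
    δ * (1 - 2 * δ) * √π * Gamma (1/2 - δ) < Gamma (1 - δ) := by
  have h := sqrt_pi_mul_one_sub_two_mul_mul_Gamma_add_one_lt (x := 1/2 - δ) (by linarith)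
  rwa [Gamma_add_one (by linarith), show 1/2 - δ + 1/2 = 1 - δ by ring,
    show √π * (1 - 2 * (1/2 - δ)) * ((1/2 - δ) * Gamma (1/2 - δ))
      = δ * (1 - 2 * δ) * √π * Gamma (1/2 - δ) by ring] at h

end Real

theorem stmt19 (δ : ℝ) (hδ0 : 0 < δ) (hδ1 : δ < 1/2) :
    ((1 / (δ * (1 - 2*δ) * Real.sqrt π)) * ∫ t in Set.Ioi (0:ℝ), Real.exp (-t) * t ^ (-δ))
        ≠ ∫ t in Set.Ioi (0:ℝ), Real.exp (-t) * t ^ (-(1:ℝ)/2 - δ)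
    ∧ Real.Gamma (1 - δ) ≠ δ * (1 - 2*δ) * Real.sqrt π * Real.Gamma (1/2 - δ) := by
  have hlt := mul_one_sub_two_mul_mul_sqrt_pi_mul_Gamma_lt hδ1
  have hc : 0 < δ * (1 - 2 * δ) * √π :=
    mul_pos (mul_pos hδ0 (by linarith)) (sqrt_pos.mpr pi_pos)
  have hI₁ : ∫ t in Set.Ioi (0:ℝ), exp (-t) * t ^ (-δ) = Gamma (1 - δ) := by
    rw [Gamma_eq_integral (by linarith), sub_sub_cancel_left]
  have hI₂ : ∫ t in Set.Ioi (0:ℝ), exp (-t) * t ^ (-(1:ℝ)/2 - δ) = Gamma (1/2 - δ) := by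
    rw [Gamma_eq_integral (by linarith), show (1:ℝ)/2 - δ - 1 = -1/2 - δ by ring]
  rw [hI₁, hI₂, one_div_mul_eq_div, Ne, div_eq_iff hc.ne']
  exact ⟨fun h => hlt.ne' (h.trans (mul_comm _ _)), hlt.ne'⟩
end
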